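/- arXiv:1305.2610 — 2 statements merged into one kernel-verified Lean document; each statement's English description precedes it below -/
import Mathlib

section
/- Let k ≥ 2 and x ∈ Δ_k with x_1 = max_{1≤j≤k} x_j. Then F_{k+1}(x) ≥ F_2(x) + F_3(x) + … + F_k(x). More precisely, F_{k+1}(x) − Σ_{i=2}^k F_i(x) = (x_{k+1} − Σ_{i=2}^k x_i)² + 2 Σ_{i=2}^k (x_1 − x_i) x_i. -/
open Filter Topology

/-- The map F on ℝ^{k+1} (coordinates indexed 0,…,k; the last coordinate is the
"empty" state).  For i < k, F_i(x) = x_i² + 2 x_i x_k; the last coordinate is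
F_k(x) = x_k² + 2 Σ_{a<b<k} x_a x_b. -/
noncomputable def Fmap (k : ℕ) (x : Fin (k + 1) → ℝ) : Fin (k + 1) → ℝ :=
  fun i =>
    if i.val < k then x i ^ 2 + 2 * x i * x (Fin.last k)
    else x (Fin.last k) ^ 2 +
      2 * ∑ a : Fin (k + 1), ∑ b : Fin (k + 1),
        (if a.val < b.val ∧ b.val < k then x a * x b else 0)

/-- The open simplex Δ_k ⊆ ℝ^{k+1}. -/
def simplex (k : ℕ) : Set (Fin (k + 1) → ℝ) :=
  {p | (∑ i, p i) = 1 ∧ ∀ i, 0 < p i}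

/-
Write S and Q for the sum and the sum of squares of x_2, …, x_k. The identity
2 Σ_{a<b} y_a y_b = (Σ y)² − Σ y², applied to y = (x_1, …, x_k), turns both sides into
polynomials in x_1, x_{k+1}, S and Q, and F_{k+1} − Σ_{i=2}^k F_i becomes
(x_{k+1} − S)² + 2 (x_1 S − Q). Finally x_1 S − Q = Σ_{i=2}^k (x_1 − x_i) x_i is nonnegative
because x_1 is the largest of x_1, …, x_k.
-/

open Finset

theorem Finset.two_mul_sum_sum_ite_lt {ι R : Type*} [LinearOrder ι] [CommRing R]
    (s : Finset ι) (f : ι → R) :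
    2 * ∑ a ∈ s, ∑ b ∈ s, (if a < b then f a * f b else 0)
      = (∑ i ∈ s, f i) ^ 2 - ∑ i ∈ s, f i ^ 2 := by
  induction s using Finset.induction_on_max with
  | empty => simp
  | insert a s ha ih =>
    have hna : a ∉ s := fun h => lt_irrefl a (ha a h)
    have hrow : ∑ b ∈ insert a s, (if a < b then f a * f b else 0) = 0 :=
      sum_eq_zero fun b hb => if_neg (by grind)
    have hcol : ∀ c ∈ s, ∑ b ∈ insert a s, (if c < b then f c * f b else 0)
        = f c * f a + ∑ b ∈ s, (if c < b then f c * f b else 0) := fun c hc => by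
      rw [sum_insert hna, if_pos (ha c hc)]
    rw [sum_insert hna, hrow, sum_congr rfl hcol, sum_add_distrib, ← sum_mul, sum_insert hna,
      sum_insert hna]
    linear_combination ih

theorem Fmap_of_lt {k : ℕ} (x : Fin (k + 1) → ℝ) {i : Fin (k + 1)} (hi : i.val < k) :
    Fmap k x i = x i ^ 2 + 2 * x i * x (Fin.last k) :=
  if_pos hi

theorem Fmap_last (k : ℕ) (x : Fin (k + 1) → ℝ) :
    Fmap k x (Fin.last k) = x (Fin.last k) ^ 2
      + (∑ i ∈ {i : Fin (k + 1) | i.val < k}, x i) ^ 2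
      - ∑ i ∈ {i : Fin (k + 1) | i.val < k}, x i ^ 2 := by
  have hpairs : ∑ a : Fin (k + 1), ∑ b : Fin (k + 1),
        (if a.val < b.val ∧ b.val < k then x a * x b else 0)
      = ∑ a ∈ {i : Fin (k + 1) | i.val < k}, ∑ b ∈ {i : Fin (k + 1) | i.val < k},
        (if a < b then x a * x b else 0) := by
    simp only [sum_filter]
    refine sum_congr rfl fun a _ => ?_
    split_ifs with ha
    · exact sum_congr rfl fun b _ => by split_ifs <;> grind
    · exact sum_eq_zero fun b _ => if_neg (by omega)
  rw [Fmap, if_neg (by simp), hpairs, two_mul_sum_sum_ite_lt, add_sub_assoc]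

theorem Fin.sum_val_lt_eq_zero_add_sum_pos {M : Type*} [AddCommMonoid M] {k : ℕ} (hk : 0 < k)
    (g : Fin (k + 1) → M) :
    ∑ i ∈ {i : Fin (k + 1) | i.val < k}, g i
      = g 0 + ∑ i ∈ {i : Fin (k + 1) | 1 ≤ i.val ∧ i.val < k}, g i := by
  rw [← add_sum_erase _ _ (a := 0) (by simpa using hk)]
  congr 2
  ext i
  simp only [mem_erase, mem_filter, mem_univ, true_and, ne_eq, Fin.ext_iff, Fin.val_zero]
  omega

/-- If x ∈ Δ_k with x_1 = max_{1≤j≤k} x_j (0-indexed: x_0 maximal among the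
first k coordinates), then F_{k+1}(x) − Σ_{i=2}^k F_i(x)
= (x_{k+1} − Σ_{i=2}^k x_i)² + 2 Σ_{i=2}^k (x_1 − x_i) x_i, and in particular
F_{k+1}(x) ≥ Σ_{i=2}^k F_i(x). -/
theorem empty_reinforces (k : ℕ) (hk : 2 ≤ k) (x : Fin (k + 1) → ℝ)
    (hx : x ∈ simplex k)
    (hmax : ∀ j : Fin (k + 1), j.val < k → x j ≤ x 0) :
    (Fmap k x (Fin.last k) -
        (∑ j : Fin (k + 1), if 1 ≤ j.val ∧ j.val < k then Fmap k x j else 0)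
      = (x (Fin.last k) -
          ∑ j : Fin (k + 1), if 1 ≤ j.val ∧ j.val < k then x j else 0) ^ 2
        + 2 * ∑ j : Fin (k + 1),
            (if 1 ≤ j.val ∧ j.val < k then (x 0 - x j) * x j else 0)) ∧
    (∑ j : Fin (k + 1), if 1 ≤ j.val ∧ j.val < k then Fmap k x j else 0)
      ≤ Fmap k x (Fin.last k) := by
  set L := x (Fin.last k)
  set M : Finset (Fin (k + 1)) := {j | 1 ≤ j.val ∧ j.val < k}
  simp only [← sum_filter]
  have hF_last : Fmap k x (Fin.last k)
      = L ^ 2 + (x 0 + ∑ j ∈ M, x j) ^ 2 - (x 0 ^ 2 + ∑ j ∈ M, x j ^ 2) := by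
    rw [Fmap_last, Fin.sum_val_lt_eq_zero_add_sum_pos (by omega),
      Fin.sum_val_lt_eq_zero_add_sum_pos (by omega)]
  have hF_mid : ∑ j ∈ M, Fmap k x j = ∑ j ∈ M, x j ^ 2 + 2 * L * ∑ j ∈ M, x j := by
    rw [mul_sum, ← sum_add_distrib]
    refine sum_congr rfl fun j hj => ?_
    rw [Fmap_of_lt x (mem_filter.1 hj).2.2]
    ring
  have hcross : ∑ j ∈ M, (x 0 - x j) * x j = x 0 * ∑ j ∈ M, x j - ∑ j ∈ M, x j ^ 2 := by
    rw [mul_sum, ← sum_sub_distrib]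
    exact sum_congr rfl fun j _ => by ring
  have hcross_nonneg : 0 ≤ ∑ j ∈ M, (x 0 - x j) * x j :=
    sum_nonneg fun j hj => mul_nonneg (sub_nonneg.2 (hmax j (mem_filter.1 hj).2.2)) (hx.2 j).le
  have hid : Fmap k x (Fin.last k) - ∑ j ∈ M, Fmap k x j
      = (L - ∑ j ∈ M, x j) ^ 2 + 2 * ∑ j ∈ M, (x 0 - x j) * x j := by
    rw [hF_last, hF_mid, hcross]
    ring
  exact ⟨hid, by linarith [sq_nonneg (L - ∑ j ∈ M, x j)]⟩
end

section
/- Let k ≥ 2 and p ∈ Δ_k with p_1 ≥ p_2 ≥ … ≥ p_k, and suppose p_1 = … = p_i > p_{i+1} for some i ∈ {1,…,k−1}. Writing p(n) = F^n(p), the sequences (p_{i+1}(n))_{n≥1}, (p_{i+2}(n))_{n≥1}, …, (p_k(n))_{n≥1} all converge to zero. -/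
open Filter Topology

/-!
On its first `k` coordinates `F` acts by `x_j ↦ x_j (x_j + 2 x_k)`, which is increasing in `x_j`,
so `F` preserves their order; it preserves the simplex because `Σ F(x) = (Σ x)²`. On a sorted
point `x_k ≥ 1 - k x_0`, which keeps `x_0` above `min (p_0, (2k - 1)⁻²)` along the orbit. Each
step multiplies the ratio `x_j / x_0` by `(x_j + 2 x_k) / (x_0 + 2 x_k) ≤ 1 - x_0 (1 - x_j / x_0) / 2`,
so when `p_j < p_0` the ratio, and with it `x_j`, decays geometrically.
-/

open Finset Set

def sortedSimplex (k : ℕ) : Set (Fin (k + 1) → ℝ) :=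
  {x | x ∈ simplex k ∧ Antitone fun j : Fin k => x j.castSucc}

section

variable {k : ℕ}

theorem sq_sum_eq_sum_sq_add_two_mul_sum_lt {ι R : Type*} [Fintype ι] [LinearOrder ι]
    [CommSemiring R] (f : ι → R) :
    (∑ i, f i) ^ 2 = ∑ i, f i ^ 2 + 2 * ∑ a, ∑ b, if a < b then f a * f b else 0 := by
  have expand : ∀ a b, f a * f b = (if a < b then f a * f b else 0) +
      (if b < a then f b * f a else 0) + (if a = b then f a ^ 2 else 0) := by
    intro a b
    rcases lt_trichotomy a b with h | rfl | h
    · simp [h, h.not_gt, h.ne]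
    · simp [sq]
    · simp [h, h.not_gt, h.ne', mul_comm]
  rw [sq, Fintype.sum_mul_sum, sum_congr rfl fun a _ => sum_congr rfl fun b _ => expand a b]
  simp only [sum_add_distrib, Fintype.sum_ite_eq]
  rw [sum_comm (f := fun a b => if b < a then f b * f a else 0)]
  ring

theorem Fmap_castSucc (x : Fin (k + 1) → ℝ) (j : Fin k) :
    Fmap k x j.castSucc = x j.castSucc * (x j.castSucc + 2 * x (Fin.last k)) := by
  simp only [Fmap, Fin.val_castSucc, j.is_lt, if_true]; ring

theorem Fmap_last_s6 (x : Fin (k + 1) → ℝ) :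
    Fmap k x (Fin.last k) = x (Fin.last k) ^ 2 +
      2 * ∑ a : Fin k, ∑ b : Fin k, if a < b then x a.castSucc * x b.castSucc else 0 := by
  have not_last_lt (b : Fin (k + 1)) : ¬ Fin.last k < b := not_lt.2 (Fin.le_last b)
  simp [Fmap, Fin.sum_univ_castSucc, not_last_lt]

theorem sum_Fmap (x : Fin (k + 1) → ℝ) : ∑ i, Fmap k x i = (∑ i, x i) ^ 2 := by
  simp only [Fin.sum_univ_castSucc (f := Fmap k x), Fin.sum_univ_castSucc (f := x), Fmap_castSucc,
    Fmap_last_s6, add_sq (∑ i : Fin k, x i.castSucc), sq_sum_eq_sum_sq_add_two_mul_sum_lt, mul_add,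
    sum_add_distrib, ← sum_mul, ← sq]
  ring

theorem mapsTo_Fmap_simplex : MapsTo (Fmap k) (simplex k) (simplex k) := by
  rintro x ⟨hsum, hpos⟩
  refine ⟨by rw [sum_Fmap, hsum, one_pow], fun j => ?_⟩
  cases j using Fin.lastCases with
  | last =>
    have hT : 0 ≤ ∑ a : Fin k, ∑ b : Fin k,
        if a < b then x a.castSucc * x b.castSucc else 0 :=
      sum_nonneg fun a _ => sum_nonneg fun b _ => by
        split_ifs
        exacts [(mul_pos (hpos _) (hpos _)).le, le_rfl]
    rw [Fmap_last_s6]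
    have := hpos (Fin.last k)
    positivity
  | cast j =>
    rw [Fmap_castSucc]
    have := hpos j.castSucc
    have := hpos (Fin.last k)
    positivity

theorem le_one_of_mem_simplex {x : Fin (k + 1) → ℝ} (hx : x ∈ simplex k) (i : Fin (k + 1)) :
    x i ≤ 1 :=
  hx.1 ▸ single_le_sum (fun j _ => (hx.2 j).le) (Finset.mem_univ i)

theorem add_le_one_of_mem_simplex {x : Fin (k + 1) → ℝ} (hx : x ∈ simplex k)
    {i j : Fin (k + 1)} (hij : i ≠ j) : x i + x j ≤ 1 := by
  rw [← sum_pair hij, ← hx.1]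
  exact sum_le_sum_of_subset_of_nonneg (Finset.subset_univ _) fun l _ _ => (hx.2 l).le

theorem antitone_castSucc_of_succ_le {β : Type*} [Preorder β] {x : Fin (k + 1) → β}
    (h : ∀ j : ℕ, (hj : j + 1 < k) →
      x ⟨j + 1, Nat.lt_succ_of_lt hj⟩ ≤ x ⟨j, Nat.lt_succ_of_lt (Nat.lt_of_succ_lt hj)⟩) :
    Antitone fun j : Fin k => x j.castSucc := by
  cases k with
  | zero => exact Subsingleton.antitone _
  | succ n => exact Fin.antitone_iff_succ_le.2 fun j => h j (by omega)

theorem mapsTo_Fmap_sortedSimplex : MapsTo (Fmap k) (sortedSimplex k) (sortedSimplex k) := by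
  rintro x ⟨hx, hanti⟩
  refine ⟨mapsTo_Fmap_simplex hx, fun a b hab => ?_⟩
  have hb := hx.2 b.castSucc
  have hL := hx.2 (Fin.last k)
  have := hanti hab
  simp only [Fmap_castSucc]
  nlinarith

theorem one_sub_mul_le_last {x : Fin (k + 1) → ℝ} (hx : x ∈ sortedSimplex k) (hk : 0 < k) :
    1 - k * x 0 ≤ x (Fin.last k) := by
  have hle : ∀ j : Fin k, x j.castSucc ≤ x 0 := fun j =>
    hx.2 (show (⟨0, hk⟩ : Fin k) ≤ j from Nat.zero_le _)
  have hsum := hx.1.1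
  rw [Fin.sum_univ_castSucc] at hsum
  have := sum_le_sum fun j (_ : j ∈ Finset.univ) => hle j
  simp only [sum_const, card_univ, Fintype.card_fin, nsmul_eq_mul] at this
  linarith

theorem le_Fmap_zero {x : Fin (k + 1) → ℝ} (hx : x ∈ sortedSimplex k) (hk : 0 < k) {m : ℝ}
    (hm : m ≤ x 0) (hmk : m * (2 * k - 1) ^ 2 ≤ 1) : m ≤ Fmap k x 0 := by
  have hF : Fmap k x 0 = x 0 * (x 0 + 2 * x (Fin.last k)) := Fmap_castSucc x ⟨0, hk⟩
  have hL := one_sub_mul_le_last hx hk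
  have h0 := hx.1.2 0
  have hLpos := hx.1.2 (Fin.last k)
  rw [hF]
  -- `F_0(x) ≥ x_0 (2 - (2k - 1) x_0)`: this is `≥ x_0` below the threshold, and `F_0(x) ≥ x_0²`
  -- is large enough above it.
  rcases le_or_gt (x 0 * (2 * k - 1)) 1 with h | h
  · nlinarith
  · have hsq : 1 < x 0 ^ 2 * (2 * k - 1) ^ 2 := by nlinarith
    have : m < x 0 ^ 2 := by
      by_contra! hle
      nlinarith [mul_le_mul_of_nonneg_right hle (sq_nonneg ((2 : ℝ) * k - 1))]
    nlinarith

theorem mapsTo_Fmap_sortedSimplex_inter (hk : 0 < k) {m : ℝ} (hmk : m * (2 * k - 1) ^ 2 ≤ 1) :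
    MapsTo (Fmap k) (sortedSimplex k ∩ {x | m ≤ x 0}) (sortedSimplex k ∩ {x | m ≤ x 0}) :=
  fun _ ⟨hx, hm⟩ => ⟨mapsTo_Fmap_sortedSimplex hx, le_Fmap_zero hx hk hm hmk⟩

theorem Fmap_castSucc_le {x : Fin (k + 1) → ℝ} (hx : x ∈ simplex k) (hk : 0 < k) (j : Fin k)
    {m r c : ℝ} (hm0 : 0 ≤ m) (hm : m ≤ x 0) (hcr : c ≤ r) (hr : r ≤ 1)
    (hj : x j.castSucc ≤ c * x 0) :
    Fmap k x j.castSucc ≤ c * (1 - m * (1 - r) / 2) * Fmap k x 0 := by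
  set t := x j.castSucc
  set s := x 0
  set L := x (Fin.last k)
  have hF : Fmap k x 0 = s * (s + 2 * L) := Fmap_castSucc x ⟨0, hk⟩
  have ht := hx.2 j.castSucc
  have hL := hx.2 (Fin.last k)
  have hsL : s + L ≤ 1 := add_le_one_of_mem_simplex hx (Fin.castSucc_lt_last ⟨0, hk⟩).ne
  have hcs : 0 ≤ c * s := ht.le.trans hj
  have hfactor : c * s + 2 * L ≤ (1 - m * (1 - r) / 2) * (s + 2 * L) := by
    have : m * (1 - r) * (s + 2 * L) ≤ m * (1 - r) * 2 :=
      mul_le_mul_of_nonneg_left (by linarith) (mul_nonneg hm0 (by linarith))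
    nlinarith
  calc Fmap k x j.castSucc = t * (t + 2 * L) := Fmap_castSucc x j
    _ ≤ c * s * (c * s + 2 * L) := by gcongr
    _ ≤ c * s * ((1 - m * (1 - r) / 2) * (s + 2 * L)) := by gcongr
    _ = c * (1 - m * (1 - r) / 2) * Fmap k x 0 := by rw [hF]; ring

theorem iterate_Fmap_castSucc_le {p : Fin (k + 1) → ℝ} (hp : p ∈ sortedSimplex k) (j : Fin k)
    {m r : ℝ} (hm0 : 0 ≤ m) (hm : m ≤ p 0) (hmk : m * (2 * k - 1) ^ 2 ≤ 1) (hr0 : 0 ≤ r)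
    (hr : r ≤ 1) (hj : p j.castSucc ≤ r * p 0) (n : ℕ) :
    (Fmap k)^[n] p j.castSucc ≤ r * (1 - m * (1 - r) / 2) ^ n * (Fmap k)^[n] p 0 := by
  have hm1 : m ≤ 1 := hm.trans (le_one_of_mem_simplex hp.1 0)
  have hρ0 : 0 ≤ 1 - m * (1 - r) / 2 := by nlinarith
  have hρ1 : 1 - m * (1 - r) / 2 ≤ 1 := by nlinarith
  induction n with
  | zero => simpa using hj
  | succ n ih =>
    obtain ⟨hq, hqm⟩ := (mapsTo_Fmap_sortedSimplex_inter j.pos hmk).iterate n ⟨hp, hm⟩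
    rw [Function.iterate_succ_apply', pow_succ, ← mul_assoc r]
    exact Fmap_castSucc_le hq.1 j.pos j hm0 hqm
      (mul_le_of_le_one_right hr0 (pow_le_one₀ hρ0 hρ1)) hr ih

theorem tendsto_iterate_Fmap_castSucc {p : Fin (k + 1) → ℝ} (hp : p ∈ sortedSimplex k)
    (j : Fin k) (hj : p j.castSucc < p 0) :
    Tendsto (fun n => (Fmap k)^[n] p j.castSucc) atTop (𝓝 0) := by
  have hk : (1 : ℝ) ≤ k := by exact_mod_cast j.pos
  have hp0 := hp.1.2 0
  have hden : 0 < ((2 : ℝ) * k - 1) ^ 2 := by nlinarith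
  set m := min (p 0) (1 / (2 * k - 1) ^ 2)
  set r := p j.castSucc / p 0
  have hm0 : 0 < m := lt_min hp0 (by positivity)
  have hmk : m * (2 * k - 1) ^ 2 ≤ 1 := (le_div_iff₀ hden).1 (min_le_right _ _)
  have hr0 : 0 < r := div_pos (hp.1.2 _) hp0
  have hr1 : r < 1 := (div_lt_one hp0).2 hj
  have hρ0 : 0 ≤ 1 - m * (1 - r) / 2 := by
    nlinarith [min_le_left (p 0) (1 / (2 * k - 1) ^ 2), le_one_of_mem_simplex hp.1 0]
  have hρ1 : 1 - m * (1 - r) / 2 < 1 := by nlinarith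
  have bound (n : ℕ) : (Fmap k)^[n] p j.castSucc ≤ r * (1 - m * (1 - r) / 2) ^ n :=
    (iterate_Fmap_castSucc_le hp j hm0.le (min_le_left _ _) hmk hr0.le hr1.le
      (div_mul_cancel₀ _ hp0.ne').ge n).trans
      (mul_le_of_le_one_right (by positivity)
        (le_one_of_mem_simplex ((mapsTo_Fmap_simplex.iterate n) hp.1) 0))
  refine squeeze_zero (fun n => ((mapsTo_Fmap_simplex.iterate n) hp.1).2 _ |>.le) bound ?_
  simpa using (tendsto_pow_atTop_nhds_zero_of_lt_one hρ0 hρ1).const_mul r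

end

/-- Under the hypotheses of Theorem 1(b), the sequences p_{i+1}(n),…,p_k(n)
(0-indexed: coordinates i,…,k−1 of F^n(p)) all converge to zero. -/
theorem small_coordinates_tendsto_zero (k : ℕ)
    (p : Fin (k + 1) → ℝ) (hp : p ∈ simplex k)
    (hsort : ∀ j : ℕ, (hj : j + 1 < k) →
      p ⟨j + 1, by omega⟩ ≤ p ⟨j, by omega⟩)
    (i : ℕ) (hik : i < k)
    (hlt : p ⟨i, by omega⟩ < p 0) :
    ∀ j : ℕ, (hij : i ≤ j) → (hjk : j < k) →
      Tendsto (fun n => (Fmap k)^[n] p ⟨j, by omega⟩) atTop (𝓝 0) := by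
  intro j hij hjk
  have hsorted : p ∈ sortedSimplex k := ⟨hp, antitone_castSucc_of_succ_le hsort⟩
  have hpj : p (Fin.castSucc ⟨j, hjk⟩) ≤ p (Fin.castSucc ⟨i, hik⟩) :=
    hsorted.2 (show (⟨i, hik⟩ : Fin k) ≤ ⟨j, hjk⟩ from hij)
  exact tendsto_iterate_Fmap_castSucc hsorted ⟨j, hjk⟩ (hpj.trans_lt hlt)
end
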